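/- arXiv:1801.03180 — 2 statements merged into one kernel-verified Lean document; each statement's English description precedes it below -/
import Mathlib

section
/- Let p be an odd prime, α ≥ 1, n ≥ 2, and let Σ = {(ω, ω₁² + ⋯ + ω_{n-1}²) : ω ∈ (ℤ/p^αℤ)^{n-1}} be the paraboloid in (ℤ/p^αℤ)^n. Let μ̌(x) := p^{-(n-1)α} Σ_{ω ∈ (ℤ/p^αℤ)^{n-1}} e^{2πi(x'·ω + x_n(ω₁²+⋯+ω_{n-1}²))/p^α} for x = (x', x_n). Then |μ̌(x)| ≤ ‖x‖^{-(n-1)/2}, where ‖x‖ := p^α / gcd(x₁, …, x_n, p^α). -/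
open scoped BigOperators

/-- The standard additive character of `ℤ/p^αℤ`. -/
noncomputable def zchar (p α : ℕ) (x : ZMod (p ^ α)) : ℂ :=
  Complex.exp (2 * Real.pi * Complex.I * (x.val : ℂ) / (p : ℂ) ^ α)

/-- The norm `‖x‖ = p^α / gcd(x₁, …, x_k, p^α)` of a vector over `ℤ/p^αℤ`. -/
def normZ (p α k : ℕ) (x : Fin k → ZMod (p ^ α)) : ℕ :=
  p ^ α / Nat.gcd (Finset.univ.gcd fun j => (x j).val) (p ^ α)

/-!
Write `N = p^α`, `a = x_n` and `g = gcd(a, N)`. The sum factors over the coordinates into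
one-dimensional sums `G(a, b) = ∑ᵤ e((b u + a u²) / N)`. Expanding `|G|²` and substituting
`u = v + h` (a differencing step, possible because `2` is a unit mod the odd number `N`) leaves
`|G|² = N ∑_{a h = 0} e(b h)`. The kernel of multiplication by `a` is the cyclic subgroup of
order `g` generated by `N / g`, so this character sum is `g` if `g ∣ b` and `0` otherwise. Hence
`|μ̌(x)|` is either `0` or `N^{-(n-1)} (N g)^{(n-1)/2} = (N / g)^{-(n-1)/2}`, and in the second
case `g` divides every coordinate of `x`, so `N / g = ‖x‖` and the bound holds with equality.
-/

open Finset

namespace AddChar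

section Monoid

variable {G M : Type*} [AddCommMonoid G] [CommMonoid M]

lemma map_sum_eq_prod {ι : Type*} (ψ : AddChar G M) (s : Finset ι) (f : ι → G) :
    ψ (∑ i ∈ s, f i) = ∏ i ∈ s, ψ (f i) := by
  have := map_prod ψ.toMonoidHom (fun i => Multiplicative.ofAdd (f i)) s
  rwa [← ofAdd_sum] at this

end Monoid

lemma sum_paraboloid_eq_prod {R ι M : Type*} [CommRing R] [Fintype R] [Fintype ι]
    [DecidableEq ι] [CommSemiring M] (ψ : AddChar R M) (c : ι → R) (a : R) :
    ∑ ω : ι → R, ψ (∑ j, c j * ω j + a * ∑ j, ω j ^ 2) =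
      ∏ j, ∑ u, ψ (c j * u + a * u ^ 2) := by
  rw [Fintype.prod_sum]
  refine sum_congr rfl fun ω _ => ?_
  rw [mul_sum, ← sum_add_distrib, ψ.map_sum_eq_prod]

lemma sum_filter_mem_addSubgroup_eq_ite {G R : Type*} [AddCommGroup G] [Fintype G] [CommRing R]
    [IsDomain R] [DecidableEq R] (ψ : AddChar G R) (H : AddSubgroup G) [DecidablePred (· ∈ H)] :
    ∑ h ∈ univ.filter (· ∈ H), ψ h =
      if ∀ h ∈ H, ψ h = 1 then (#(univ.filter (· ∈ H)) : R) else 0 := by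
  split_ifs with htriv
  · rw [sum_congr rfl fun h hh => htriv h (mem_filter.1 hh).2, sum_const, nsmul_one]
  · push Not at htriv
    obtain ⟨h₀, hh₀, hψ⟩ := htriv
    refine eq_zero_of_mul_eq_self_left hψ ?_
    rw [mul_sum]
    refine sum_nbij' (h₀ + ·) (-h₀ + ·) ?_ ?_ ?_ ?_ ?_ <;>
      simp [AddSubgroup.add_mem_cancel_left, hh₀, map_add_eq_mul]

lemma sum_quadratic_mul_conj {R : Type*} [CommRing R] [Fintype R] [DecidableEq R]
    (ψ : AddChar R ℂ) (hψ : ψ.IsPrimitive) (h2 : IsUnit (2 : R)) (a b : R) :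
    (∑ u, ψ (b * u + a * u ^ 2)) * starRingEnd ℂ (∑ u, ψ (b * u + a * u ^ 2)) =
      Fintype.card R * ∑ h ∈ univ.filter (a * · = 0), ψ (b * h) := by
  set f : R → R := fun u => b * u + a * u ^ 2
  have hdiff (v h : R) : f (v + h) - f v = f h + v * (2 * a * h) := by simp only [f]; ring
  calc (∑ u, ψ (f u)) * starRingEnd ℂ (∑ u, ψ (f u))
      = ∑ v, ∑ h, ψ (f (v + h) - f v) := by
        rw [map_sum, sum_mul_sum, sum_comm]
        refine sum_congr rfl fun v _ => ?_
        rw [← Equiv.sum_comp (Equiv.addLeft v)]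
        simp [← map_neg_eq_conj, ← map_add_eq_mul, sub_eq_add_neg]
    _ = ∑ h, ψ (f h) * ∑ v, ψ (v * (2 * a * h)) := by
        rw [sum_comm]
        simp only [hdiff, map_add_eq_mul, mul_sum]
    _ = ∑ h, ψ (f h) * if a * h = 0 then (Fintype.card R : ℂ) else 0 := by
        simp only [sum_mulShift _ hψ, mul_assoc, h2.mul_right_eq_zero, apply_ite Nat.cast,
          Nat.cast_zero]
    _ = Fintype.card R * ∑ h ∈ univ.filter (a * · = 0), ψ (b * h) := by
        rw [sum_filter, mul_sum]
        refine sum_congr rfl fun h _ => ?_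
        split_ifs with hah
        · simp only [f, pow_two, ← mul_assoc, hah, zero_mul, add_zero]
          exact mul_comm _ _
        · simp

end AddChar

namespace ZMod

variable {N : ℕ} [NeZero N]

lemma mul_eq_zero_iff_mem_zmultiples (a h : ZMod N) :
    a * h = 0 ↔ h ∈ AddSubgroup.zmultiples ((N / Nat.gcd a.val N : ℕ) : ZMod N) := by
  set g := Nat.gcd a.val N
  constructor
  · intro hah
    have hmod : a.val * h.val ≡ a.val * 0 [MOD N] := by
      rw [← natCast_eq_natCast_iff]; simpa using hah
    have hdvd := hmod.cancel_left_div_gcd (Nat.pos_of_ne_zero (NeZero.ne N))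
    rw [Nat.gcd_comm, Nat.modEq_zero_iff_dvd] at hdvd
    obtain ⟨k, hk⟩ := hdvd
    rw [← natCast_zmod_val h, hk, Nat.cast_mul, mul_comm, ← nsmul_eq_mul]
    exact AddSubgroup.nsmul_mem _ (AddSubgroup.mem_zmultiples _) k
  · rintro ⟨k, rfl⟩
    obtain ⟨a', ha'⟩ := Nat.gcd_dvd_left a.val N
    have hdvd : N ∣ a.val * (N / g) :=
      ⟨a', by rw [ha', mul_comm g, mul_assoc, Nat.mul_div_cancel' (Nat.gcd_dvd_right _ _),
        mul_comm]⟩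
    rw [mul_smul_comm, ← natCast_zmod_val a, ← Nat.cast_mul, (natCast_eq_zero_iff _ _).2 hdvd,
      smul_zero]

lemma addOrderOf_natCast_div_gcd (a : ℕ) :
    addOrderOf ((N / Nat.gcd a N : ℕ) : ZMod N) = Nat.gcd a N := by
  rw [addOrderOf_coe _ (NeZero.ne N),
    Nat.gcd_eq_right (Nat.div_dvd_of_dvd (Nat.gcd_dvd_right _ _)),
    Nat.div_div_self (Nat.gcd_dvd_right _ _) (NeZero.ne N)]

lemma mul_natCast_div_eq_zero_iff (b : ZMod N) {g : ℕ} (hg : g ∣ N) :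
    b * ((N / g : ℕ) : ZMod N) = 0 ↔ g ∣ b.val := by
  have hm : N / g ≠ 0 := fun h => NeZero.ne N (by rw [← Nat.div_mul_cancel hg, h, zero_mul])
  have hdvd_iff (v : ℕ) : N ∣ v * (N / g) ↔ g ∣ v := by
    nth_rewrite 1 [← Nat.mul_div_cancel' hg]
    exact Nat.mul_dvd_mul_iff_right (Nat.pos_of_ne_zero hm)
  rw [← natCast_zmod_val b, ← Nat.cast_mul, natCast_eq_zero_iff, val_natCast_of_lt b.val_lt]
  exact hdvd_iff _

lemma sum_stdAddChar_filter_mul_eq_zero (a b : ZMod N) :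
    ∑ h ∈ univ.filter (a * · = 0), stdAddChar (b * h) =
      if Nat.gcd a.val N ∣ b.val then (Nat.gcd a.val N : ℂ) else 0 := by
  classical
  set H := AddSubgroup.zmultiples ((N / Nat.gcd a.val N : ℕ) : ZMod N)
  have htriv : (∀ h ∈ H, stdAddChar (b * h) = 1) ↔ Nat.gcd a.val N ∣ b.val := by
    rw [← mul_natCast_div_eq_zero_iff b (Nat.gcd_dvd_right _ _)]
    constructor
    · intro h1
      exact injective_stdAddChar
        ((h1 _ (AddSubgroup.mem_zmultiples _)).trans (AddChar.map_zero_eq_one _).symm)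
    · rintro h0 _ ⟨k, rfl⟩
      rw [mul_smul_comm, h0, smul_zero, AddChar.map_zero_eq_one]
  have hcard : #(univ.filter (· ∈ H)) = Nat.gcd a.val N := by
    rw [← Fintype.card_subtype, ← Nat.card_eq_fintype_card, Nat.card_zmultiples,
      addOrderOf_natCast_div_gcd]
  rw [filter_congr fun h _ => mul_eq_zero_iff_mem_zmultiples a h]
  have := (stdAddChar.mulShift b).sum_filter_mem_addSubgroup_eq_ite H
  simp only [AddChar.mulShift_apply, hcard] at this
  rw [this]
  simp only [htriv]

lemma sq_norm_sum_stdAddChar_quadratic (hN : Odd N) (a b : ZMod N) :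
    ‖∑ u, stdAddChar (b * u + a * u ^ 2)‖ ^ 2 =
      if Nat.gcd a.val N ∣ b.val then (N * Nat.gcd a.val N : ℝ) else 0 := by
  have h2 : IsUnit (2 : ZMod N) := by
    simpa using (isUnit_iff_coprime 2 N).2 hN.coprime_two_left
  have := stdAddChar.sum_quadratic_mul_conj (isPrimitive_stdAddChar N) h2 a b
  rw [Complex.mul_conj, ← Complex.sq_norm, sum_stdAddChar_filter_mul_eq_zero, card] at this
  split_ifs at this ⊢
  · exact_mod_cast this
  · rw [mul_zero] at this
    exact_mod_cast this

lemma norm_sum_stdAddChar_quadratic_of_dvd (hN : Odd N) (a b : ZMod N)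
    (hdvd : Nat.gcd a.val N ∣ b.val) :
    ‖∑ u, stdAddChar (b * u + a * u ^ 2)‖ =
      N * ((N / Nat.gcd a.val N : ℕ) : ℝ) ^ (-(1 / 2 : ℝ)) := by
  have hN0 : (N : ℝ) ≠ 0 := Nat.cast_ne_zero.2 (NeZero.ne N)
  have hg : (Nat.gcd a.val N : ℝ) ≠ 0 := by
    exact_mod_cast (Nat.gcd_pos_of_pos_right _ (Nat.pos_of_ne_zero (NeZero.ne N))).ne'
  have ht : (0 : ℝ) ≤ ((N / Nat.gcd a.val N : ℕ) : ℝ) := Nat.cast_nonneg _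
  rw [← pow_left_inj₀ (norm_nonneg _) (by positivity) two_ne_zero,
    sq_norm_sum_stdAddChar_quadratic hN, if_pos hdvd, mul_pow, ← Real.rpow_mul_natCast ht,
    Nat.cast_div (Nat.gcd_dvd_right _ _) hg]
  norm_num [Real.rpow_neg_one]
  field_simp

lemma sum_stdAddChar_quadratic_eq_zero_of_not_dvd (hN : Odd N) (a b : ZMod N)
    (hdvd : ¬ Nat.gcd a.val N ∣ b.val) :
    ∑ u, stdAddChar (b * u + a * u ^ 2) = 0 := by
  have := sq_norm_sum_stdAddChar_quadratic hN a b
  rwa [if_neg hdvd, sq_eq_zero_iff, norm_eq_zero] at this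

lemma norm_inv_mul_sum_stdAddChar_paraboloid {ι : Type*} [Fintype ι] [DecidableEq ι]
    (hN : Odd N) (c : ι → ZMod N) (a : ZMod N) :
    ‖((N : ℂ) ^ Fintype.card ι)⁻¹ *
        ∑ ω : ι → ZMod N, stdAddChar (∑ j, c j * ω j + a * ∑ j, ω j ^ 2)‖ =
      if ∀ j, Nat.gcd a.val N ∣ (c j).val then
        ((N / Nat.gcd a.val N : ℕ) : ℝ) ^ (-(Fintype.card ι : ℝ) / 2) else 0 := by
  rw [AddChar.sum_paraboloid_eq_prod, norm_mul, norm_prod, norm_inv, norm_pow,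
    Complex.norm_natCast]
  split_ifs with hdvd
  · have hN0 : (N : ℝ) ≠ 0 := Nat.cast_ne_zero.2 (NeZero.ne N)
    simp only [norm_sum_stdAddChar_quadratic_of_dvd hN a _ (hdvd _), prod_const, card_univ,
      mul_pow, inv_mul_cancel_left₀ (pow_ne_zero _ hN0),
      ← Real.rpow_mul_natCast (Nat.cast_nonneg _)]
    ring_nf
  · push Not at hdvd
    obtain ⟨j, hj⟩ := hdvd
    have hGj : ‖∑ u, stdAddChar (c j * u + a * u ^ 2)‖ = 0 := by
      rw [sum_stdAddChar_quadratic_eq_zero_of_not_dvd hN a _ hj, norm_zero]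
    rw [prod_eq_zero (mem_univ j) hGj, mul_zero]

end ZMod

lemma zchar_eq_stdAddChar (p α : ℕ) [NeZero (p ^ α)] : zchar p α = ZMod.stdAddChar := by
  ext x
  rw [zchar, ZMod.stdAddChar_apply, ZMod.toCircle_apply]
  push_cast
  ring_nf

lemma normZ_eq_of_forall_gcd_dvd (p α k : ℕ) (x : Fin k → ZMod (p ^ α)) (i : Fin k)
    (hdvd : ∀ j, Nat.gcd (x i).val (p ^ α) ∣ (x j).val) :
    normZ p α k x = p ^ α / Nat.gcd (x i).val (p ^ α) := by
  rw [normZ]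
  congr 1
  refine Nat.dvd_antisymm (Nat.dvd_gcd ?_ (Nat.gcd_dvd_right _ _))
    (Nat.dvd_gcd (Finset.dvd_gcd fun j _ => hdvd j) (Nat.gcd_dvd_right _ _))
  exact (Nat.gcd_dvd_left _ _).trans (Finset.gcd_dvd (mem_univ i))

theorem stmt_1 (p α n : ℕ) [NeZero (p ^ α)] (hodd : Odd p)
    (hn : 2 ≤ n) (x : Fin n → ZMod (p ^ α)) :
    ‖((p : ℂ) ^ ((n - 1) * α))⁻¹ *
        ∑ ω : Fin (n - 1) → ZMod (p ^ α),
          zchar p α ((∑ j : Fin (n - 1), x (Fin.castLE (Nat.sub_le n 1) j) * ω j) +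
            x ⟨n - 1, by omega⟩ * ∑ j : Fin (n - 1), ω j ^ 2)‖
      ≤ (normZ p α n x : ℝ) ^ (-((n : ℝ) - 1) / 2) := by
  set last : Fin n := ⟨n - 1, by omega⟩
  have hpow : (p : ℂ) ^ ((n - 1) * α) = ((p ^ α : ℕ) : ℂ) ^ Fintype.card (Fin (n - 1)) := by
    rw [Fintype.card_fin, Nat.cast_pow, ← pow_mul, mul_comm]
  rw [hpow, zchar_eq_stdAddChar, ZMod.norm_inv_mul_sum_stdAddChar_paraboloid hodd.pow]
  split_ifs with hdvd
  · have hlast_dvd : ∀ j, Nat.gcd (x last).val (p ^ α) ∣ (x j).val := by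
      intro j
      by_cases hj : (j : ℕ) < n - 1
      · exact hdvd ⟨j, hj⟩
      · rw [show j = last from Fin.ext (by simp [last]; omega)]
        exact Nat.gcd_dvd_left _ _
    rw [normZ_eq_of_forall_gcd_dvd p α n x last hlast_dvd, Fintype.card_fin,
      Nat.cast_sub (by omega), Nat.cast_one]
  · exact Real.rpow_nonneg (Nat.cast_nonneg _) _
end

section
/- Let (G, {B^G_ρ}, {B^{Ĝ}_ρ}, {φ_ρ}) be a Littlewood-Paley system, 0 < b ≤ a < n, and μ a probability measure on Ĝ satisfying (Rμ) and (Fμ). Let r₀ := (2(n-a)+b)/(n-a+b) and s₀ := (2(n-a)+b)/(n-a). Then for all Borel sets E, F ⊆ Ĝ, ⟨μ ∗ χ_E, χ_F⟩ ≲_{n,a,b} (C₁+C₂)^{1-θ} A^{1-θ} B^{θ} m̂(E)^{1/r₀} m̂(F)^{1/s₀′}, where θ = 2(n-a)/(2(n-a)+b); consequently the operator f ↦ f ∗ μ is of restricted weak-type (r₀, s₀). -/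
/-!
On the Fourier side, `|G| ⟨μ ∗ χ_E, χ_F⟩ = ∑ₓ χ̌_F(x) μ̌(-x) χ̌_E(-x)`; insert
`1 = φ_ρ + (1 - φ_ρ)`. The `φ_ρ` part is a triple sum against `φ̂_ρ`. Cutting `Ĝ` into the ball
of radius `1/ρ` and the dyadic shells of radii `2 ^ k / ρ`, (R), (F) and (Rμ) give
`∑_η μ(η) |φ̂_ρ(η - v)| ≲ (C₁ + C₂) A ρ^(n-a)`, so this part is `≲ (C₁ + C₂) A ρ^(n-a) m̂(E) m̂(F)`.
The `1 - φ_ρ` part lives off `B^G_ρ`, where (Fμ) gives `|μ̌| ≤ B ρ^(-b/2)`, and Cauchy–Schwarz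
with Plancherel leaves `B ρ^(-b/2) √(m̂(E) m̂(F))`. Balancing the two terms in `ρ` gives the
estimate with `θ = (n - a) / (n - a + b/2)`.
-/

open Finset Filter Topology

section Transforms

variable {G H : Type*} [AddCommGroup G] [Fintype G] [AddCommGroup H] [Fintype H]

/-- The paper's `φ̂`, with `H` in the role of `Ĝ` and `e` the pairing of `G` with `Ĝ`. -/
def fourierHat (e : G → H → ℂ) (φ : G → ℝ) (ξ : H) : ℂ := ∑ x, (φ x : ℂ) * e (-x) ξ

/-- The paper's `f̌`. -/
def fourierCheck (e : G → H → ℂ) (f : H → ℝ) (x : G) : ℂ := ∑ ξ, (f ξ : ℂ) * e x ξ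

end Transforms

lemma sum_indicator_one_eq_ncard {ι : Type*} [Fintype ι] (S : Set ι) :
    ∑ u, S.indicator (fun _ => (1 : ℝ)) u = S.ncard := by
  classical
  simp [Set.indicator_apply, sum_boole, Set.ncard_eq_toFinset_card']

lemma sum_indicator_one_sq_eq_ncard {ι : Type*} [Fintype ι] (S : Set ι) :
    ∑ u, S.indicator (fun _ => (1 : ℝ)) u ^ 2 = S.ncard := by
  rw [← sum_indicator_one_eq_ncard]
  exact sum_congr rfl fun u _ => by by_cases hu : u ∈ S <;> simp [hu]

structure IsFourierPairing {G H : Type*} [AddCommGroup G] [Fintype G] [DecidableEq G]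
    [AddCommGroup H] [Fintype H] (e : G → H → ℂ) : Prop where
  map_add_left : ∀ (x y : G) (ξ : H), e (x + y) ξ = e x ξ * e y ξ
  map_add_right : ∀ (x : G) (ξ η : H), e x (ξ + η) = e x ξ * e x η
  norm_eq_one : ∀ (x : G) (ξ : H), ‖e x ξ‖ = 1
  sum_right : ∀ x : G, ∑ ξ : H, e x ξ = if x = 0 then (Fintype.card G : ℂ) else 0

namespace IsFourierPairing

variable {G H : Type*} [AddCommGroup G] [Fintype G] [DecidableEq G] [AddCommGroup H] [Fintype H]
  {e : G → H → ℂ} (he : IsFourierPairing e)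
include he

lemma ne_zero (x : G) (ξ : H) : e x ξ ≠ 0 :=
  fun h => by simpa [h] using he.norm_eq_one x ξ

lemma map_zero_left (ξ : H) : e 0 ξ = 1 := by
  have h := he.map_add_left 0 0 ξ
  rw [add_zero] at h
  exact (mul_eq_left₀ (he.ne_zero 0 ξ)).mp h.symm

lemma map_zero_right (x : G) : e x 0 = 1 := by
  have h := he.map_add_right x 0 0
  rw [add_zero] at h
  exact (mul_eq_left₀ (he.ne_zero x 0)).mp h.symm

lemma mul_map_neg_left (x : G) (ξ : H) : e x ξ * e (-x) ξ = 1 := by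
  rw [← he.map_add_left, add_neg_cancel, he.map_zero_left]

lemma map_neg_right (x : G) (ξ : H) : e x (-ξ) = e (-x) ξ := by
  refine mul_left_cancel₀ (he.ne_zero x ξ) ?_
  rw [← he.map_add_right, add_neg_cancel, he.map_zero_right, he.mul_map_neg_left]

lemma conj_eq (x : G) (ξ : H) : starRingEnd ℂ (e x ξ) = e (-x) ξ := by
  refine mul_left_cancel₀ (he.ne_zero x ξ) ?_
  rw [Complex.mul_conj', he.norm_eq_one, he.mul_map_neg_left]
  norm_num

lemma mul_map_neg_left_eq_map_sub (x : G) (ξ ζ : H) : e x ξ * e (-x) ζ = e x (ξ - ζ) := by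
  rw [sub_eq_add_neg, he.map_add_right, he.map_neg_right]

/-- The squares `‖∑ x, e x u‖ ^ 2` add up to `|G| ^ 2`, which is already the term at `u = 0`. -/
lemma sum_left [DecidableEq H] (u : H) :
    ∑ x : G, e x u = if u = 0 then (Fintype.card G : ℂ) else 0 := by
  set S : H → ℂ := fun u => ∑ x : G, e x u with hS
  have hS0 : S 0 = Fintype.card G := by
    change ∑ x : G, e x 0 = _
    simp [he.map_zero_right]
  have hsumC : ∑ u, S u * starRingEnd ℂ (S u) = (Fintype.card G : ℂ) ^ 2 := by
    simp_rw [hS, map_sum, he.conj_eq, sum_mul_sum, ← he.map_add_left, ← sub_eq_add_neg]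
    rw [sum_comm, sum_congr rfl fun x _ => sum_comm]
    simp [he.sum_right, sub_eq_zero, sq]
  have hsum : ∑ u, ‖S u‖ ^ 2 = (Fintype.card G : ℝ) ^ 2 := by
    simp_rw [Complex.mul_conj'] at hsumC
    exact_mod_cast hsumC
  have hrest : ∑ u ∈ univ.erase 0, ‖S u‖ ^ 2 = 0 := by
    rw [← sum_erase_add _ _ (mem_univ 0), hS0] at hsum
    simpa using hsum
  split_ifs with hu
  · rw [hu]; exact hS0
  · have := (sum_eq_zero_iff_of_nonneg fun _ _ => sq_nonneg _).mp hrest u (by simp [hu])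
    simpa using this

lemma fourierHat_one [DecidableEq H] (ξ : H) :
    fourierHat e 1 ξ = if ξ = 0 then (Fintype.card G : ℂ) else 0 := by
  rw [← he.sum_left, fourierHat]
  simp only [Pi.one_apply, Complex.ofReal_one, one_mul]
  exact Fintype.sum_equiv (Equiv.neg G) _ _ fun _ => rfl

lemma conj_fourierCheck (f : H → ℝ) (x : G) :
    starRingEnd ℂ (fourierCheck e f x) = fourierCheck e f (-x) := by
  simp [fourierCheck, he.conj_eq]

lemma sum_fourierCheck_mul_neg [DecidableEq H] (f g : H → ℝ) :
    ∑ x, fourierCheck e f x * fourierCheck e g (-x) = Fintype.card G * ∑ ξ, (f ξ * g ξ : ℝ) := by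
  simp_rw [fourierCheck, sum_mul_sum, mul_mul_mul_comm _ (e _ _), he.mul_map_neg_left_eq_map_sub]
  rw [sum_comm, sum_congr rfl fun ξ _ => sum_comm]
  simp_rw [← mul_sum, he.sum_left, sub_eq_zero, mul_ite, mul_zero, sum_ite_eq, mem_univ, if_true]
  push_cast
  rw [mul_sum]
  exact sum_congr rfl fun _ _ => by ring

lemma sum_norm_fourierCheck_sq [DecidableEq H] (f : H → ℝ) :
    ∑ x, ‖fourierCheck e f x‖ ^ 2 = Fintype.card G * ∑ ξ, f ξ ^ 2 := by
  have h := he.sum_fourierCheck_mul_neg f f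
  simp_rw [← he.conj_fourierCheck, Complex.mul_conj', ← sq] at h
  exact_mod_cast h

lemma sum_mul_fourierCheck_mul (φ : G → ℝ) (f w g : H → ℝ) :
    ∑ x, (φ x : ℂ) * (fourierCheck e f x * fourierCheck e w (-x) * fourierCheck e g (-x)) =
      ∑ ξ, ∑ η, ∑ ζ, ((f ξ * w η * g ζ : ℝ) : ℂ) * fourierHat e φ (η + ζ - ξ) := by
  have hchar : ∀ x ξ η ζ, e x ξ * e (-x) η * e (-x) ζ = e (-x) (η + ζ - ξ) := by
    intro x ξ η ζ
    rw [show e x ξ = e (-x) (-ξ) by rw [he.map_neg_right, neg_neg], ← he.map_add_right,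
      ← he.map_add_right]
    congr 1; abel
  have hx : ∀ x, (φ x : ℂ) * (fourierCheck e f x * fourierCheck e w (-x) * fourierCheck e g (-x)) =
      ∑ ξ, ∑ η, ∑ ζ, ((f ξ * w η * g ζ : ℝ) : ℂ) * ((φ x : ℂ) * e (-x) (η + ζ - ξ)) := by
    intro x
    rw [fourierCheck, fourierCheck, fourierCheck, sum_mul_sum, sum_mul, mul_sum]
    simp_rw [sum_mul, mul_sum]
    refine sum_congr rfl fun ξ _ => sum_congr rfl fun η _ => sum_congr rfl fun ζ _ => ?_
    rw [← hchar]
    push_cast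
    ring
  simp_rw [hx, fourierHat, mul_sum]
  rw [sum_comm]
  refine sum_congr rfl fun ξ _ => ?_
  rw [sum_comm]
  refine sum_congr rfl fun η _ => ?_
  rw [sum_comm]

lemma sum_fourierCheck_mul_mul [DecidableEq H] (f w g : H → ℝ) :
    ∑ x, fourierCheck e f x * fourierCheck e w (-x) * fourierCheck e g (-x) =
      Fintype.card G * ∑ ξ, (f ξ * ∑ η, w η * g (ξ - η) : ℝ) := by
  have h := he.sum_mul_fourierCheck_mul 1 f w g
  simp only [Pi.one_apply, Complex.ofReal_one, one_mul, he.fourierHat_one] at h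
  rw [h, Complex.ofReal_sum, mul_sum]
  refine sum_congr rfl fun ξ _ => ?_
  simp_rw [sub_eq_zero, ← eq_sub_iff_add_eq', mul_ite, mul_zero, sum_ite_eq', mem_univ, if_true]
  push_cast
  rw [mul_sum, mul_sum]
  exact sum_congr rfl fun _ _ => by ring

lemma norm_fourierHat_le_ncard {φ : G → ℝ} {T : Set G} (hφ : ∀ x, |φ x| ≤ 1)
    (hsupp : ∀ x, φ x ≠ 0 → x ∈ T) (ξ : H) : ‖fourierHat e φ ξ‖ ≤ T.ncard := by
  calc ‖fourierHat e φ ξ‖ ≤ ∑ x, |φ x| := (norm_sum_le _ _).trans_eq <| by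
        simp [he.norm_eq_one]
    _ ≤ ∑ x, T.indicator (fun _ => (1 : ℝ)) x := sum_le_sum fun x _ => by
        by_cases hx : φ x = 0
        · simp [hx, Set.indicator_nonneg]
        · simpa [Set.indicator_of_mem (hsupp x hx)] using hφ x
    _ = T.ncard := sum_indicator_one_eq_ncard T

lemma sum_norm_fourierCheck_mul_le [DecidableEq H] (f g : H → ℝ) :
    ∑ x, ‖fourierCheck e f x‖ * ‖fourierCheck e g (-x)‖ ≤
      Fintype.card G * (√(∑ ξ, f ξ ^ 2) * √(∑ ξ, g ξ ^ 2)) := by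
  have hneg : ∑ x, ‖fourierCheck e g (-x)‖ ^ 2 = ∑ x, ‖fourierCheck e g x‖ ^ 2 :=
    Fintype.sum_equiv (Equiv.neg G) _ _ fun _ => rfl
  calc _ ≤ √(∑ x, ‖fourierCheck e f x‖ ^ 2) * √(∑ x, ‖fourierCheck e g (-x)‖ ^ 2) :=
        Real.sum_mul_le_sqrt_mul_sqrt _ _ _
    _ = _ := by
        rw [hneg, he.sum_norm_fourierCheck_sq, he.sum_norm_fourierCheck_sq,
          Real.sqrt_mul (Nat.cast_nonneg _), Real.sqrt_mul (Nat.cast_nonneg _)]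
        have := Real.mul_self_sqrt (Nat.cast_nonneg (Fintype.card G) : (0 : ℝ) ≤ _)
        linear_combination (√(∑ ξ, f ξ ^ 2) * √(∑ ξ, g ξ ^ 2)) * this

lemma norm_sum_one_sub_mul_le [DecidableEq H] {S : Set G} {φ : G → ℝ} {w f g : H → ℝ} {β : ℝ}
    (hβ : 0 ≤ β) (hS : ∀ x, x ∈ S → -x ∈ S) (hφ1 : ∀ x ∈ S, φ x = 1) (hφ : ∀ x, |φ x| ≤ 1)
    (hw : ∀ x, x ∉ S → ‖fourierCheck e w x‖ ≤ β) :
    ‖∑ x, ((1 - φ x : ℝ) : ℂ) *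
        (fourierCheck e f x * fourierCheck e w (-x) * fourierCheck e g (-x))‖ ≤
      2 * β * (Fintype.card G * (√(∑ ξ, f ξ ^ 2) * √(∑ ξ, g ξ ^ 2))) := by
  have hfactor : ∀ x, |1 - φ x| * ‖fourierCheck e w (-x)‖ ≤ 2 * β := fun x => by
    by_cases hx : x ∈ S
    · simp [hφ1 x hx]; positivity
    · have h1 : |1 - φ x| ≤ 2 := by
        have := abs_le.mp (hφ x); exact abs_le.mpr ⟨by linarith, by linarith⟩
      exact mul_le_mul h1 (hw _ fun h => hx (by simpa using hS _ h)) (norm_nonneg _) zero_le_two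
  calc _ ≤ ∑ x, (|1 - φ x| * ‖fourierCheck e w (-x)‖) *
        (‖fourierCheck e f x‖ * ‖fourierCheck e g (-x)‖) :=
        (norm_sum_le _ _).trans_eq <| sum_congr rfl fun x _ => by
          simp only [norm_mul, Complex.norm_real, Real.norm_eq_abs]; ring
    _ ≤ ∑ x, 2 * β * (‖fourierCheck e f x‖ * ‖fourierCheck e g (-x)‖) :=
        sum_le_sum fun x _ => mul_le_mul_of_nonneg_right (hfactor x) (by positivity)
    _ ≤ _ := by
        rw [← mul_sum]; gcongr; exact he.sum_norm_fourierCheck_mul_le f g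

end IsFourierPairing

lemma norm_sum_mul_kernel_le {H : Type*} [AddCommGroup H] [Fintype H] {f w g : H → ℝ}
    {k : H → ℂ} {M : ℝ} (hf : ∀ ξ, 0 ≤ f ξ) (hw : ∀ η, 0 ≤ w η) (hg : ∀ ζ, 0 ≤ g ζ)
    (hk : ∀ v, ∑ η, w η * ‖k (η - v)‖ ≤ M) :
    ‖∑ ξ, ∑ η, ∑ ζ, ((f ξ * w η * g ζ : ℝ) : ℂ) * k (η + ζ - ξ)‖ ≤
      M * (∑ ξ, f ξ) * ∑ ζ, g ζ := by
  calc ‖∑ ξ, ∑ η, ∑ ζ, ((f ξ * w η * g ζ : ℝ) : ℂ) * k (η + ζ - ξ)‖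
      ≤ ∑ ξ, ∑ η, ∑ ζ, ‖((f ξ * w η * g ζ : ℝ) : ℂ) * k (η + ζ - ξ)‖ :=
        (norm_sum_le _ _).trans <| sum_le_sum fun _ _ =>
          (norm_sum_le _ _).trans <| sum_le_sum fun _ _ => norm_sum_le _ _
    _ = ∑ ξ, ∑ ζ, f ξ * g ζ * ∑ η, w η * ‖k (η - (ξ - ζ))‖ := by
        refine sum_congr rfl fun ξ _ => ?_
        rw [sum_comm]
        refine sum_congr rfl fun ζ _ => ?_
        rw [mul_sum]
        refine sum_congr rfl fun η _ => ?_
        have := mul_nonneg (mul_nonneg (hf ξ) (hw η)) (hg ζ)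
        rw [norm_mul, Complex.norm_real, Real.norm_of_nonneg this, sub_sub_eq_add_sub]
        ring
    _ ≤ ∑ ξ, ∑ ζ, f ξ * g ζ * M := by
        gcongr with ξ _ ζ _
        · exact mul_nonneg (hf ξ) (hg ζ)
        · exact hk _
    _ = M * (∑ ξ, f ξ) * ∑ ζ, g ζ := by
        rw [mul_assoc, sum_mul_sum, mul_sum]
        exact sum_congr rfl fun _ _ => by rw [mul_sum]; exact sum_congr rfl fun _ _ => by ring

lemma dyadic_rpow_mul_rpow (k : ℕ) {r a n : ℝ} (hr : 0 < r) :
    (2 ^ k * r) ^ (-n) * (2 ^ (k + 1) * r) ^ a = 2 ^ a * r ^ (a - n) * ((2 : ℝ) ^ (a - n)) ^ k := by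
  rw [Real.mul_rpow (by positivity) hr.le, Real.mul_rpow (by positivity) hr.le,
    ← Real.rpow_natCast_mul zero_le_two, ← Real.rpow_natCast_mul zero_le_two,
    ← Real.rpow_mul_natCast zero_le_two, Real.rpow_sub hr, Real.rpow_neg hr.le]
  have h2 : ∀ x y : ℝ, (2 : ℝ) ^ (x + y) = 2 ^ x * 2 ^ y := Real.rpow_add two_pos
  rw [show ((k + 1 : ℕ) : ℝ) * a = a + (a - n) * k + k * n by push_cast; ring, h2, h2,
    show (k : ℝ) * -n = -(k * n) by ring, Real.rpow_neg zero_le_two]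
  field_simp

section DyadicDecomposition

variable {ι : Type*} {Ball : ℝ → Set ι}

lemma exists_mem_ball_dyadic [Finite ι] (hmono : ∀ r r', 0 < r → r ≤ r' → Ball r ⊆ Ball r')
    (hexh : ∀ u, ∃ r, 0 < r ∧ u ∈ Ball r) {r₀ : ℝ} (hr₀ : 0 < r₀) :
    ∃ K : ℕ, ∀ u, u ∈ Ball (2 ^ K * r₀) := by
  choose r hr hmem using hexh
  obtain ⟨R, hR⟩ := (Set.finite_range r).bddAbove
  obtain ⟨K, hK⟩ := pow_unbounded_of_one_lt (R / r₀) one_lt_two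
  refine ⟨K, fun u => hmono _ _ (hr u) ?_ (hmem u)⟩
  have := hR (Set.mem_range_self u)
  rw [div_lt_iff₀ hr₀] at hK
  linarith

/-- A point outside `Ball r₀` lies in a first shell
`Ball (2 ^ (j + 1) * r₀) \ Ball (2 ^ j * r₀)`, on which `g` is at most `D * (2 ^ j * r₀) ^ (-n)`. -/
lemma le_indicator_add_sum_dyadic {g : ι → ℝ} {M D n r₀ : ℝ} {K : ℕ}
    (hmono : ∀ r r', 0 < r → r ≤ r' → Ball r ⊆ Ball r') (hr₀ : 0 < r₀)
    (hK : ∀ u, u ∈ Ball (2 ^ K * r₀)) (hD : 0 ≤ D) (hg : ∀ u, g u ≤ M)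
    (hdecay : ∀ s, r₀ ≤ s → ∀ u, u ∉ Ball s → g u ≤ D * s ^ (-n)) (u : ι) :
    g u ≤ M * (Ball r₀).indicator 1 u +
      ∑ k ∈ range K, D * (2 ^ k * r₀) ^ (-n) * (Ball (2 ^ (k + 1) * r₀)).indicator 1 u := by
  have hterm : ∀ k ∈ range K,
      0 ≤ D * (2 ^ k * r₀) ^ (-n) * (Ball (2 ^ (k + 1) * r₀)).indicator 1 u := fun k _ => by
    have := Set.indicator_nonneg (fun _ _ => zero_le_one) u (s := Ball (2 ^ (k + 1) * r₀))
      (f := (1 : ι → ℝ))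
    positivity
  by_cases hu : u ∈ Ball r₀
  · rw [Set.indicator_of_mem hu, Pi.one_apply, mul_one]
    linarith [hg u, sum_nonneg hterm]
  obtain ⟨j, hj, hj1⟩ : ∃ j : ℕ, u ∉ Ball (2 ^ j * r₀) ∧ u ∈ Ball (2 ^ (j + 1) * r₀) :=
    Nat.exists_not_and_succ_of_not_zero_of_exists (by simpa using hu) ⟨K, hK u⟩
  have hjK : j ∈ range K := by
    refine mem_range.mpr (not_le.mp fun hKj => hj (hmono _ _ (by positivity) ?_ (hK u)))
    gcongr
    exact one_le_two
  rw [Set.indicator_of_notMem hu, mul_zero, zero_add]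
  calc g u ≤ D * (2 ^ j * r₀) ^ (-n) :=
        hdecay _ (le_mul_of_one_le_left hr₀.le (one_le_pow₀ one_le_two)) u hj
    _ = D * (2 ^ j * r₀) ^ (-n) * (Ball (2 ^ (j + 1) * r₀)).indicator 1 u := by
        rw [Set.indicator_of_mem hj1, Pi.one_apply, mul_one]
    _ ≤ _ := single_le_sum hterm hjK

lemma sum_mul_le_of_ball_mass [Fintype ι] {m g : ι → ℝ} {A D M a n r₀ : ℝ}
    (hmono : ∀ r r', 0 < r → r ≤ r' → Ball r ⊆ Ball r') (hexh : ∀ u, ∃ r, 0 < r ∧ u ∈ Ball r)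
    (hm : ∀ u, 0 ≤ m u) (hA : 0 ≤ A)
    (hmass : ∀ r, 0 < r → ∑ u, (Ball r).indicator 1 u * m u ≤ A * r ^ a)
    (han : a < n) (hr₀ : 0 < r₀) (hM : 0 ≤ M) (hD : 0 ≤ D) (hg : ∀ u, g u ≤ M)
    (hdecay : ∀ s, r₀ ≤ s → ∀ u, u ∉ Ball s → g u ≤ D * s ^ (-n)) :
    ∑ u, m u * g u ≤ A * (M * r₀ ^ a + D * (2 ^ a / (1 - 2 ^ (a - n))) * r₀ ^ (a - n)) := by
  obtain ⟨K, hK⟩ := exists_mem_ball_dyadic hmono hexh hr₀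
  have hq : (2 : ℝ) ^ (a - n) < 1 := Real.rpow_lt_one_of_one_lt_of_neg one_lt_two (by linarith)
  have hgeom : ∑ k ∈ range K, ((2 : ℝ) ^ (a - n)) ^ k ≤ 1 / (1 - 2 ^ (a - n)) := by
    simpa using geom_sum_Ico_le_of_lt_one (m := 0) (n := K) (by positivity) hq
  calc ∑ u, m u * g u
      ≤ ∑ u, m u * (M * (Ball r₀).indicator 1 u +
          ∑ k ∈ range K, D * (2 ^ k * r₀) ^ (-n) * (Ball (2 ^ (k + 1) * r₀)).indicator 1 u) :=
        sum_le_sum fun u _ => mul_le_mul_of_nonneg_left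
          (le_indicator_add_sum_dyadic hmono hr₀ hK hD hg hdecay u) (hm u)
    _ = M * ∑ u, (Ball r₀).indicator 1 u * m u + ∑ k ∈ range K, D * (2 ^ k * r₀) ^ (-n) *
          ∑ u, (Ball (2 ^ (k + 1) * r₀)).indicator 1 u * m u := by
        simp_rw [mul_add, sum_add_distrib, mul_sum]
        rw [sum_comm]
        congr 1 <;> refine sum_congr rfl fun _ _ => ?_
        · ring
        · exact sum_congr rfl fun _ _ => by ring
    _ ≤ M * (A * r₀ ^ a) +
          ∑ k ∈ range K, D * (2 ^ k * r₀) ^ (-n) * (A * (2 ^ (k + 1) * r₀) ^ a) := by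
        gcongr with k
        · exact hmass _ hr₀
        · exact hmass _ (by positivity)
    _ = A * (M * r₀ ^ a + D * 2 ^ a * r₀ ^ (a - n) * ∑ k ∈ range K, ((2 : ℝ) ^ (a - n)) ^ k) := by
        rw [mul_add, mul_sum, mul_sum]
        congr 1
        · ring
        refine sum_congr rfl fun k _ => ?_
        rw [show D * (2 ^ k * r₀) ^ (-n) * (A * (2 ^ (k + 1) * r₀) ^ a) =
          A * D * ((2 ^ k * r₀) ^ (-n) * (2 ^ (k + 1) * r₀) ^ a) by ring,
          dyadic_rpow_mul_rpow k hr₀]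
        ring
    _ ≤ A * (M * r₀ ^ a + D * 2 ^ a * r₀ ^ (a - n) * (1 / (1 - 2 ^ (a - n)))) := by gcongr
    _ = A * (M * r₀ ^ a + D * (2 ^ a / (1 - 2 ^ (a - n))) * r₀ ^ (a - n)) := by ring

end DyadicDecomposition

/-- `2 ^ n` comes from the ball of radius `1/ρ`, the geometric series from the dyadic shells. -/
noncomputable def dyadicConstant (n a : ℝ) : ℝ := 2 ^ n + 2 ^ a / (1 - 2 ^ (a - n))

lemma dyadicConstant_pos {n a : ℝ} (han : a < n) : 0 < dyadicConstant n a := by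
  have hq : (2 : ℝ) ^ (a - n) < 1 := Real.rpow_lt_one_of_one_lt_of_neg one_lt_two (by linarith)
  have : 0 < 1 - (2 : ℝ) ^ (a - n) := by linarith
  unfold dyadicConstant
  positivity

lemma sum_mul_norm_le_of_decay {H : Type*} [AddCommGroup H] [Fintype H] {BH : ℝ → Set H}
    {w : H → ℝ} {k : H → ℂ} {C₁ C₂ A n a ρ : ℝ} (hC₁ : 0 ≤ C₁) (hC₂ : 0 ≤ C₂) (hA : 0 ≤ A)
    (han : a < n) (hρ : 0 < ρ)
    (hBHm : ∀ ρ ρ' : ℝ, 0 < ρ → ρ ≤ ρ' → BH ρ ⊆ BH ρ')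
    (hBHs : ∀ (ρ : ℝ) (ξ : H), ξ ∈ BH ρ → -ξ ∈ BH ρ)
    (hBHc : ∀ ξ : H, ∃ ρ : ℝ, 0 < ρ ∧ ξ ∈ BH ρ)
    (hw0 : ∀ ξ : H, 0 ≤ w ξ)
    (hRmu : ∀ ρ : ℝ, 0 < ρ → ∀ ξ : H,
      ∑ η : H, Set.indicator (BH ρ) (fun _ => (1 : ℝ)) (η - ξ) * w η ≤ A * ρ ^ a)
    (hk : ∀ ξ, ‖k ξ‖ ≤ C₁ * (2 * ρ) ^ n)
    (hkdecay : ∀ s : ℝ, 1 / ρ ≤ s → ∀ ξ : H, -ξ ∉ BH s → ‖k ξ‖ ≤ C₂ * s ^ (-n)) (v : H) :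
    ∑ η, w η * ‖k (η - v)‖ ≤ dyadicConstant n a * (C₁ + C₂) * (A * ρ ^ (n - a)) := by
  have hshift : ∀ F : H → ℝ, ∑ η, F (η - v) = ∑ u, F u :=
    fun F => Fintype.sum_equiv (Equiv.subRight v) _ _ fun _ => rfl
  have hdyadic := sum_mul_le_of_ball_mass (m := fun u => w (u + v)) (g := fun u => ‖k u‖)
    (r₀ := 1 / ρ) hBHm hBHc (fun u => hw0 _) hA
    (fun r hr => by rw [← hshift]; simp only [sub_add_cancel]; exact hRmu r hr v) han
    (by positivity)
    (by positivity) hC₂ hk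
    (fun s hs u hu => hkdecay s hs u fun h => hu (by simpa using hBHs s _ h))
  have hq : (2 : ℝ) ^ (a - n) < 1 := Real.rpow_lt_one_of_one_lt_of_neg one_lt_two (by linarith)
  have hc : 0 ≤ (2 : ℝ) ^ a / (1 - 2 ^ (a - n)) := div_nonneg (by positivity) (by linarith)
  have hr₀a : (2 * ρ) ^ n * (1 / ρ) ^ a = 2 ^ n * ρ ^ (n - a) := by
    rw [Real.mul_rpow zero_le_two hρ.le, one_div, Real.inv_rpow hρ.le, Real.rpow_sub hρ]
    ring
  have hr₀an : (1 / ρ) ^ (a - n) = ρ ^ (n - a) := by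
    rw [one_div, Real.inv_rpow hρ.le, ← Real.rpow_neg hρ.le, neg_sub]
  calc ∑ η, w η * ‖k (η - v)‖ = ∑ u, w (u + v) * ‖k u‖ := by
        simpa using hshift fun u => w (u + v) * ‖k u‖
    _ ≤ _ := hdyadic
    _ = A * ρ ^ (n - a) * (2 ^ n * C₁ + 2 ^ a / (1 - 2 ^ (a - n)) * C₂) := by
        rw [mul_assoc C₁, hr₀a, hr₀an]; ring
    _ ≤ A * ρ ^ (n - a) * (dyadicConstant n a * (C₁ + C₂)) := by
        unfold dyadicConstant
        gcongr
        nlinarith [mul_nonneg hc hC₁, mul_nonneg (by positivity : (0:ℝ) ≤ 2 ^ n) hC₂]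
    _ = _ := by ring

lemma le_of_forall_le_mul_rpow_add {L X Y p q : ℝ} (hX : 0 ≤ X) (hY : 0 ≤ Y) (hp : 0 < p)
    (hq : 0 < q) (h : ∀ ρ, 0 < ρ → L ≤ X * ρ ^ p + Y * ρ ^ (-q)) :
    L ≤ 2 * X ^ (q / (p + q)) * Y ^ (p / (p + q)) := by
  have hpq : 0 < p + q := add_pos hp hq
  rcases hX.eq_or_lt with rfl | hX
  · rw [Real.zero_rpow (div_pos hq hpq).ne', mul_zero, zero_mul]
    refine ge_of_tendsto (by simpa using (tendsto_rpow_neg_atTop hq).const_mul Y) ?_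
    filter_upwards [eventually_gt_atTop 0] with ρ hρ
    simpa using h ρ hρ
  rcases hY.eq_or_lt with rfl | hY
  · rw [Real.zero_rpow (div_pos hp hpq).ne', mul_zero]
    have hcont : Tendsto (fun ρ : ℝ => X * ρ ^ p) (𝓝[>] 0) (𝓝 0) := by
      simpa [Real.zero_rpow hp.ne'] using
        (((Real.continuous_rpow_const hp.le).tendsto 0).mono_left nhdsWithin_le_nhds).const_mul X
    refine ge_of_tendsto hcont ?_
    filter_upwards [self_mem_nhdsWithin] with ρ hρ
    simpa using h ρ hρ
  -- the two terms balance at `ρ ^ (p + q) = Y / X`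
  set ρ := (Y / X) ^ (1 / (p + q))
  have hsplit : ∀ Z : ℝ, 0 < Z → Z = Z ^ (q / (p + q)) * Z ^ (p / (p + q)) := fun Z hZ => by
    rw [← Real.rpow_add hZ, ← add_div, add_comm, div_self hpq.ne', Real.rpow_one]
  have hρp : X * ρ ^ p = X ^ (q / (p + q)) * Y ^ (p / (p + q)) := by
    rw [← Real.rpow_mul (by positivity), Real.div_rpow hY.le hX.le, one_div_mul_eq_div]
    nth_rewrite 1 [hsplit X hX]
    field_simp
  have hρq : Y * ρ ^ (-q) = X ^ (q / (p + q)) * Y ^ (p / (p + q)) := by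
    rw [← Real.rpow_mul (by positivity), Real.div_rpow hY.le hX.le, one_div_mul_eq_div,
      neg_div, Real.rpow_neg (by positivity), Real.rpow_neg (by positivity)]
    nth_rewrite 1 [hsplit Y hY]
    field_simp
  calc L ≤ X * ρ ^ p + Y * ρ ^ (-q) := h ρ (by positivity)
    _ = 2 * X ^ (q / (p + q)) * Y ^ (p / (p + q)) := by rw [hρp, hρq]; ring

lemma two_mul_rpow_mul_rpow_eq {K c A B s t θ : ℝ} (hK : 0 ≤ K) (hc : 0 ≤ c) (hA : 0 ≤ A)
    (hB : 0 ≤ B) (hs : 0 ≤ s) (ht : 0 ≤ t) (hθ : θ < 2) :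
    2 * (K * c * A * (s * t)) ^ (1 - θ) * (2 * B * (√s * √t)) ^ θ =
      2 * K ^ (1 - θ) * 2 ^ θ * c ^ (1 - θ) * A ^ (1 - θ) * B ^ θ * s ^ (1 - θ / 2) *
        t ^ (1 - θ / 2) := by
  have hsqrt : ∀ u : ℝ, 0 ≤ u → √u ^ θ = u ^ (θ / 2) := fun u hu => by
    rw [Real.sqrt_eq_rpow, ← Real.rpow_mul hu]; ring_nf
  have hsplit : ∀ u : ℝ, 0 ≤ u → u ^ (1 - θ / 2) = u ^ (1 - θ) * u ^ (θ / 2) := fun u hu => by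
    rw [← Real.rpow_add' hu (by linarith)]; ring_nf
  rw [Real.mul_rpow (by positivity) (by positivity), Real.mul_rpow (by positivity) hA,
    Real.mul_rpow hK hc, Real.mul_rpow hs ht, Real.mul_rpow (by positivity) (by positivity),
    Real.mul_rpow zero_le_two hB, Real.mul_rpow (Real.sqrt_nonneg _) (Real.sqrt_nonneg _),
    hsqrt s hs, hsqrt t ht, hsplit s hs, hsplit t ht]
  ring

lemma le_of_forall_scale_le {L K c A B s t n a b : ℝ} (hK : 0 ≤ K) (hc : 0 ≤ c) (hA : 0 ≤ A)
    (hB : 0 ≤ B) (hs : 0 ≤ s) (ht : 0 ≤ t) (hb : 0 < b) (han : a < n)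
    (h : ∀ ρ, 0 < ρ → L ≤ K * c * A * (s * t) * ρ ^ (n - a) + 2 * (B * ρ ^ (-b / 2)) * (√s * √t)) :
    L ≤ 2 * K ^ (1 - 2 * (n - a) / (2 * (n - a) + b)) * 2 ^ (2 * (n - a) / (2 * (n - a) + b)) *
      c ^ (1 - 2 * (n - a) / (2 * (n - a) + b)) * A ^ (1 - 2 * (n - a) / (2 * (n - a) + b)) *
      B ^ (2 * (n - a) / (2 * (n - a) + b)) * t ^ ((n - a + b) / (2 * (n - a) + b)) *
      s ^ ((n - a + b) / (2 * (n - a) + b)) := by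
  set θ := 2 * (n - a) / (2 * (n - a) + b) with hθdef
  have hden : 0 < 2 * (n - a) + b := by linarith
  have hθ : θ < 2 := (div_lt_one hden).mpr (by linarith) |>.trans one_lt_two
  have hp : (n - a) / (n - a + b / 2) = θ := by rw [hθdef]; field_simp
  have hq : b / 2 / (n - a + b / 2) = 1 - θ := by rw [hθdef]; field_simp; ring
  have hβ : 1 - θ / 2 = (n - a + b) / (2 * (n - a) + b) := by rw [hθdef]; field_simp; ring
  have hopt := le_of_forall_le_mul_rpow_add (p := n - a) (q := b / 2) (X := K * c * A * (s * t))
    (Y := 2 * B * (√s * √t)) (by positivity) (by positivity) (by linarith) (by positivity)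
    fun ρ hρ => (h ρ hρ).trans_eq (by rw [neg_div]; ring)
  rw [hp, hq, two_mul_rpow_mul_rpow_eq hK hc hA hB hs ht hθ, hβ] at hopt
  exact hopt.trans_eq (by ring)

namespace IsFourierPairing

variable {G H : Type*} [AddCommGroup G] [Fintype G] [DecidableEq G] [AddCommGroup H] [Fintype H]
  {e : G → H → ℂ} (he : IsFourierPairing e)
include he

lemma inv_card_mul_sum_mul_conv_le [DecidableEq H] {S T : Set G} {BH : ℝ → Set H} {φ : G → ℝ}
    {w f g : H → ℝ} {C₁ C₂ A β n a ρ : ℝ} (hC₁ : 0 ≤ C₁) (hC₂ : 0 ≤ C₂) (hA : 0 ≤ A)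
    (hβ : 0 ≤ β) (han : a < n) (hρ : 0 < ρ) (hS : ∀ x, x ∈ S → -x ∈ S)
    (hT : (T.ncard : ℝ) ≤ C₁ * (2 * ρ) ^ n)
    (hBHm : ∀ ρ ρ' : ℝ, 0 < ρ → ρ ≤ ρ' → BH ρ ⊆ BH ρ')
    (hBHs : ∀ (ρ : ℝ) (ξ : H), ξ ∈ BH ρ → -ξ ∈ BH ρ)
    (hBHc : ∀ ξ : H, ∃ ρ : ℝ, 0 < ρ ∧ ξ ∈ BH ρ)
    (hφ1 : ∀ x ∈ S, φ x = 1) (hφT : ∀ x, φ x ≠ 0 → x ∈ T) (hφ : ∀ x, |φ x| ≤ 1)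
    (hFd : ∀ s : ℝ, 1 / ρ ≤ s → ∀ ξ : H, -ξ ∉ BH s → ‖fourierHat e φ ξ‖ ≤ C₂ * s ^ (-n))
    (hw0 : ∀ ξ : H, 0 ≤ w ξ)
    (hRmu : ∀ ρ : ℝ, 0 < ρ → ∀ ξ : H,
      ∑ η : H, Set.indicator (BH ρ) (fun _ => (1 : ℝ)) (η - ξ) * w η ≤ A * ρ ^ a)
    (hFmu : ∀ x, x ∉ S → ‖fourierCheck e w x‖ ≤ β) (hf : ∀ ξ, 0 ≤ f ξ) (hg : ∀ ξ, 0 ≤ g ξ) :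
    (Fintype.card G : ℝ)⁻¹ * ∑ ξ, f ξ * ∑ η, w η * g (ξ - η) ≤
      dyadicConstant n a * (C₁ + C₂) * A *
          ((∑ ξ, f ξ) / Fintype.card G * ((∑ ξ, g ξ) / Fintype.card G)) * ρ ^ (n - a) +
        2 * β * (√((∑ ξ, f ξ ^ 2) / Fintype.card G) * √((∑ ξ, g ξ ^ 2) / Fintype.card G)) := by
  set P : G → ℂ := fun x => fourierCheck e f x * fourierCheck e w (-x) * fourierCheck e g (-x)
  have hnonneg : 0 ≤ ∑ ξ, f ξ * ∑ η, w η * g (ξ - η) :=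
    sum_nonneg fun ξ _ => mul_nonneg (hf ξ) (sum_nonneg fun η _ => mul_nonneg (hw0 η) (hg _))
  have hsplit : ∑ x, P x = ∑ x, (φ x : ℂ) * P x + ∑ x, ((1 - φ x : ℝ) : ℂ) * P x := by
    rw [← sum_add_distrib]; exact sum_congr rfl fun x _ => by push_cast; ring
  have hnear : ‖∑ x, (φ x : ℂ) * P x‖ ≤
      dyadicConstant n a * (C₁ + C₂) * (A * ρ ^ (n - a)) * (∑ ξ, f ξ) * (∑ ξ, g ξ) := by
    rw [he.sum_mul_fourierCheck_mul]
    refine norm_sum_mul_kernel_le hf hw0 hg fun v => ?_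
    exact sum_mul_norm_le_of_decay hC₁ hC₂ hA han hρ hBHm hBHs hBHc hw0 hRmu
      (fun ξ => (he.norm_fourierHat_le_ncard hφ hφT ξ).trans hT) hFd v
  have hN : (0 : ℝ) < Fintype.card G := Nat.cast_pos.mpr Fintype.card_pos
  have hmain : (Fintype.card G : ℝ) * ∑ ξ, f ξ * ∑ η, w η * g (ξ - η) ≤
      dyadicConstant n a * (C₁ + C₂) * (A * ρ ^ (n - a)) * (∑ ξ, f ξ) * (∑ ξ, g ξ) +
        2 * β * (Fintype.card G * (√(∑ ξ, f ξ ^ 2) * √(∑ ξ, g ξ ^ 2))) := calc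
    (Fintype.card G : ℝ) * ∑ ξ, f ξ * ∑ η, w η * g (ξ - η) = ‖∑ x, P x‖ := by
        rw [he.sum_fourierCheck_mul_mul, norm_mul, Complex.norm_natCast, Complex.norm_real,
          Real.norm_of_nonneg hnonneg]
    _ ≤ _ := by
        rw [hsplit]
        exact (norm_add_le _ _).trans (add_le_add hnear
          (he.norm_sum_one_sub_mul_le hβ hS hφ1 hφ hFmu))
  rw [← mul_le_mul_iff_of_pos_left (mul_pos hN hN), Real.sqrt_div' _ hN.le,
    Real.sqrt_div' _ hN.le]
  refine (le_of_eq ?_).trans (hmain.trans_eq ?_)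
  · rw [mul_assoc, mul_inv_cancel_left₀ hN.ne']
  · rw [div_mul_div_comm _ (√_), Real.mul_self_sqrt hN.le]
    field_simp

end IsFourierPairing

theorem stmt_5_general (n a b : ℝ) (hb : 0 < b) (han : a < n) :
    ∃ C : ℝ, 0 < C ∧
      ∀ C₁ C₂ C₃ A B : ℝ, 0 ≤ C₁ → 0 ≤ C₂ → 0 ≤ C₃ → 0 ≤ A → 0 ≤ B →
      ∀ (G H : Type) [AddCommGroup G] [Fintype G] [DecidableEq G]
        [AddCommGroup H] [Fintype H]
        (e : G → H → ℂ) (BG : ℝ → Set G) (BH : ℝ → Set H)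
        (φ : ℝ → G → ℝ) (w : H → ℝ),
        (∀ (x y : G) (ξ : H), e (x + y) ξ = e x ξ * e y ξ) →
        (∀ (x : G) (ξ η : H), e x (ξ + η) = e x ξ * e x η) →
        (∀ (x : G) (ξ : H), ‖e x ξ‖ = 1) →
        (∀ x : G, ∑ ξ : H, e x ξ = if x = 0 then (Fintype.card G : ℂ) else 0) →
        (∀ ρ ρ' : ℝ, 0 < ρ → ρ ≤ ρ' → BG ρ ⊆ BG ρ') →
        (∀ (ρ : ℝ) (x : G), x ∈ BG ρ → -x ∈ BG ρ) →
        (∀ x : G, ∃ ρ : ℝ, 0 < ρ ∧ x ∈ BG ρ) →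
        (∀ ρ ρ' : ℝ, 0 < ρ → ρ ≤ ρ' → BH ρ ⊆ BH ρ') →
        (∀ (ρ : ℝ) (ξ : H), ξ ∈ BH ρ → -ξ ∈ BH ρ) →
        (∀ ξ : H, ∃ ρ : ℝ, 0 < ρ ∧ ξ ∈ BH ρ) →
        (∀ ρ : ℝ, 0 < ρ → ((BG ρ).ncard : ℝ) ≤ C₁ * ρ ^ n) →
        (∀ ρ : ℝ, 0 < ρ → ∀ x ∈ BG ρ, φ ρ x = 1) →
        (∀ ρ : ℝ, 0 < ρ → ∀ x : G, φ ρ x ≠ 0 → x ∈ BG (2 * ρ)) →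
        (∀ (ρ : ℝ) (x : G), |φ ρ x| ≤ 1) →
        (∀ ρ : ℝ, 0 < ρ → ∀ s : ℝ, 1 / ρ ≤ s → ∀ ξ : H, -ξ ∉ BH s →
          ‖∑ x : G, (φ ρ x : ℂ) * e (-x) ξ‖ ≤ C₂ * s ^ (-n)) →
        (∀ ρ : ℝ, 0 < ρ →
          (Fintype.card G : ℝ)⁻¹ *
              ∑ ξ : H, ‖∑ x : G, (φ ρ x : ℂ) * e (-x) ξ‖ ≤ C₃) →
        (∀ ξ : H, 0 ≤ w ξ) →
        (∀ ρ : ℝ, 0 < ρ → ∀ ξ : H,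
          ∑ η : H, Set.indicator (BH ρ) (fun _ => (1 : ℝ)) (η - ξ) * w η ≤ A * ρ ^ a) →
        (∀ ρ : ℝ, 0 < ρ → ∀ x : G, x ∉ BG ρ →
          ‖∑ ξ : H, (w ξ : ℂ) * e x ξ‖ ≤ B * ρ ^ (-b / 2)) →
        (∑ ξ : H, w ξ) = 1 →
        ∀ E F : Set H,
          (Fintype.card G : ℝ)⁻¹ *
              ∑ ξ : H, Set.indicator F (fun _ => (1 : ℝ)) ξ *
                ∑ η : H, w η * Set.indicator E (fun _ => (1 : ℝ)) (ξ - η)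
            ≤ C * (C₁ + C₂) ^ (1 - 2 * (n - a) / (2 * (n - a) + b)) *
                A ^ (1 - 2 * (n - a) / (2 * (n - a) + b)) *
                B ^ (2 * (n - a) / (2 * (n - a) + b)) *
                ((E.ncard : ℝ) / (Fintype.card G : ℝ)) ^ ((n - a + b) / (2 * (n - a) + b)) *
                ((F.ncard : ℝ) / (Fintype.card G : ℝ)) ^ ((n - a + b) / (2 * (n - a) + b)) := by
  refine ⟨2 * dyadicConstant n a ^ (1 - 2 * (n - a) / (2 * (n - a) + b)) *
      2 ^ (2 * (n - a) / (2 * (n - a) + b)), by have := dyadicConstant_pos han; positivity,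
    fun C₁ C₂ C₃ A B hC₁ hC₂ _ hA hB G H _ _ _ _ _ e BG BH φ w he1 he2 he3 he4 _ hBGs _ hBHm hBHs
      hBHc hR hφ1 hφs hφle hFd _ hw0 hRmu hFmu _ E F => ?_⟩
  classical
  have he : IsFourierPairing e := ⟨he1, he2, he3, he4⟩
  refine le_of_forall_scale_le (dyadicConstant_pos han).le (by linarith) hA hB (by positivity)
    (by positivity) hb han fun ρ hρ => ?_
  have h := he.inv_card_mul_sum_mul_conv_le hC₁ hC₂ hA (by positivity : 0 ≤ B * ρ ^ (-b / 2))
    han hρ (hBGs ρ) (hR (2 * ρ) (by positivity)) hBHm hBHs hBHc (hφ1 ρ hρ) (hφs ρ hρ) (hφle ρ)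
    (hFd ρ hρ) hw0 hRmu (hFmu ρ hρ) (f := F.indicator fun _ => 1) (g := E.indicator fun _ => 1)
    (fun _ => Set.indicator_nonneg (fun _ _ => zero_le_one) _)
    (fun _ => Set.indicator_nonneg (fun _ _ => zero_le_one) _)
  simpa only [sum_indicator_one_eq_ncard, sum_indicator_one_sq_eq_ncard] using h

theorem stmt_5 (n a b : ℝ) (hb : 0 < b) (hba : b ≤ a) (han : a < n) :
    ∃ C : ℝ, 0 < C ∧
      ∀ C₁ C₂ C₃ A B : ℝ, 0 ≤ C₁ → 0 ≤ C₂ → 0 ≤ C₃ → 0 ≤ A → 0 ≤ B →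
      ∀ (G H : Type) [AddCommGroup G] [Fintype G] [DecidableEq G]
        [AddCommGroup H] [Fintype H]
        (e : G → H → ℂ) (BG : ℝ → Set G) (BH : ℝ → Set H)
        (φ : ℝ → G → ℝ) (w : H → ℝ),
        (∀ (x y : G) (ξ : H), e (x + y) ξ = e x ξ * e y ξ) →
        (∀ (x : G) (ξ η : H), e x (ξ + η) = e x ξ * e x η) →
        (∀ (x : G) (ξ : H), ‖e x ξ‖ = 1) →
        (∀ x : G, ∑ ξ : H, e x ξ = if x = 0 then (Fintype.card G : ℂ) else 0) →
        (∀ ρ ρ' : ℝ, 0 < ρ → ρ ≤ ρ' → BG ρ ⊆ BG ρ') →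
        (∀ (ρ : ℝ) (x : G), x ∈ BG ρ → -x ∈ BG ρ) →
        (∀ x : G, ∃ ρ : ℝ, 0 < ρ ∧ x ∈ BG ρ) →
        (∀ ρ ρ' : ℝ, 0 < ρ → ρ ≤ ρ' → BH ρ ⊆ BH ρ') →
        (∀ (ρ : ℝ) (ξ : H), ξ ∈ BH ρ → -ξ ∈ BH ρ) →
        (∀ ξ : H, ∃ ρ : ℝ, 0 < ρ ∧ ξ ∈ BH ρ) →
        (∀ ρ : ℝ, 0 < ρ → ((BG ρ).ncard : ℝ) ≤ C₁ * ρ ^ n) →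
        (∀ ρ : ℝ, 0 < ρ → ∀ x ∈ BG ρ, φ ρ x = 1) →
        (∀ ρ : ℝ, 0 < ρ → ∀ x : G, φ ρ x ≠ 0 → x ∈ BG (2 * ρ)) →
        (∀ (ρ : ℝ) (x : G), |φ ρ x| ≤ 1) →
        (∀ ρ : ℝ, 0 < ρ → ∀ s : ℝ, 1 / ρ ≤ s → ∀ ξ : H, -ξ ∉ BH s →
          ‖∑ x : G, (φ ρ x : ℂ) * e (-x) ξ‖ ≤ C₂ * s ^ (-n)) →
        (∀ ρ : ℝ, 0 < ρ →
          (Fintype.card G : ℝ)⁻¹ *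
              ∑ ξ : H, ‖∑ x : G, (φ ρ x : ℂ) * e (-x) ξ‖ ≤ C₃) →
        (∀ ξ : H, 0 ≤ w ξ) →
        (∀ ρ : ℝ, 0 < ρ → ∀ ξ : H,
          ∑ η : H, Set.indicator (BH ρ) (fun _ => (1 : ℝ)) (η - ξ) * w η ≤ A * ρ ^ a) →
        (∀ ρ : ℝ, 0 < ρ → ∀ x : G, x ∉ BG ρ →
          ‖∑ ξ : H, (w ξ : ℂ) * e x ξ‖ ≤ B * ρ ^ (-b / 2)) →
        (∑ ξ : H, w ξ) = 1 →
        ∀ E F : Set H,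
          (Fintype.card G : ℝ)⁻¹ *
              ∑ ξ : H, Set.indicator F (fun _ => (1 : ℝ)) ξ *
                ∑ η : H, w η * Set.indicator E (fun _ => (1 : ℝ)) (ξ - η)
            ≤ C * (C₁ + C₂) ^ (1 - 2 * (n - a) / (2 * (n - a) + b)) *
                A ^ (1 - 2 * (n - a) / (2 * (n - a) + b)) *
                B ^ (2 * (n - a) / (2 * (n - a) + b)) *
                ((E.ncard : ℝ) / (Fintype.card G : ℝ)) ^ ((n - a + b) / (2 * (n - a) + b)) *
                ((F.ncard : ℝ) / (Fintype.card G : ℝ)) ^ ((n - a + b) / (2 * (n - a) + b)) :=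
  stmt_5_general n a b hb han
end
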